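/- arXiv:1602.00256 — 3 statements merged into one kernel-verified Lean document; each statement's English description precedes it below -/
import Mathlib

section
/- Let X₁, X₂, … be i.i.d. real random variables with E|X₁| < ∞ and E X₁² = ∞. Then for every fixed k > 0, the probability p_n = P(|X₁ − x̄_n| > k s_n) tends to 0 as n → ∞. -/
/-!
By the strong law of large numbers, `x̄ₙ → E X₁` almost surely. Applying it to the bounded
variables `min (X_j²) M` and letting `M → ∞` (monotone convergence, `E X₁² = ∞`) shows that
`(1/n) ∑ X_j² → ∞` almost surely, hence so does `sₙ² = (1/n) ∑ X_j² - x̄ₙ²`. So almost surely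
`k sₙ` eventually exceeds the convergent quantity `|X₁ - x̄ₙ|`, and the probability of the
event tends to `0` by dominated convergence.
-/

open MeasureTheory ProbabilityTheory Filter Finset Topology

noncomputable def empMean {Ω : Type*} (X : ℕ → Ω → ℝ) (n : ℕ) (ω : Ω) : ℝ :=
  (∑ j ∈ Finset.range n, X j ω) / n

noncomputable def empStd {Ω : Type*} (X : ℕ → Ω → ℝ) (n : ℕ) (ω : Ω) : ℝ :=
  Real.sqrt ((∑ j ∈ Finset.range n, (X j ω - empMean X n ω) ^ 2) / n)

section Empirical

variable {Ω : Type*} (X : ℕ → Ω → ℝ)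

lemma sum_sq_sub_empMean_div {n : ℕ} (hn : n ≠ 0) (ω : Ω) :
    (∑ j ∈ range n, (X j ω - empMean X n ω) ^ 2) / n
      = (∑ j ∈ range n, X j ω ^ 2) / n - empMean X n ω ^ 2 := by
  have hn' : (n : ℝ) ≠ 0 := Nat.cast_ne_zero.2 hn
  simp only [sub_sq, sum_add_distrib, sum_sub_distrib, ← sum_mul, ← mul_sum, sum_const,
    card_range, nsmul_eq_mul, empMean]
  field_simp
  ring

lemma tendsto_empStd_atTop {ω : Ω} {m : ℝ}
    (hmean : Tendsto (fun n => empMean X n ω) atTop (𝓝 m))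
    (hsq : Tendsto (fun n : ℕ => (∑ j ∈ range n, X j ω ^ 2) / n) atTop atTop) :
    Tendsto (fun n => empStd X n ω) atTop atTop := by
  have hvar : Tendsto (fun n : ℕ => (∑ j ∈ range n, (X j ω - empMean X n ω) ^ 2) / n)
      atTop atTop := by
    refine (hsq.atTop_add (hmean.pow 2).neg).congr' ?_
    filter_upwards [eventually_ne_atTop 0] with n hn
    rw [sum_sq_sub_empMean_div X hn, sub_eq_add_neg]
  exact Real.tendsto_sqrt_atTop.comp hvar

variable [MeasurableSpace Ω] {X}

lemma measurable_empMean (hX : ∀ i, Measurable (X i)) (n : ℕ) : Measurable (empMean X n) :=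
  (Finset.measurable_sum _ fun i _ => hX i).div_const _

lemma measurable_empStd (hX : ∀ i, Measurable (X i)) (n : ℕ) : Measurable (empStd X n) :=
  Real.continuous_sqrt.measurable.comp <| (Finset.measurable_sum _ fun i _ =>
    ((hX i).sub (measurable_empMean hX n)).pow_const 2).div_const _

end Empirical

section InfiniteMean

variable {Ω : Type*} [MeasurableSpace Ω] {μ : Measure Ω}

lemma tendsto_integral_min_atTop_of_lintegral_eq_top [IsFiniteMeasure μ] {g : Ω → ℝ}
    (hg : AEMeasurable g μ) (hg0 : 0 ≤ᵐ[μ] g) (htop : ∫⁻ ω, ENNReal.ofReal (g ω) ∂μ = ⊤) :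
    Tendsto (fun M : ℕ => ∫ ω, min (g ω) M ∂μ) atTop atTop := by
  have hmin : ∀ M : ℕ, AEMeasurable (fun ω => min (g ω) M) μ := fun M => hg.min aemeasurable_const
  have hlin : Tendsto (fun M : ℕ => ∫⁻ ω, ENNReal.ofReal (min (g ω) M) ∂μ) atTop (𝓝 ⊤) := by
    rw [← htop]
    refine lintegral_tendsto_of_tendsto_of_monotone (fun M => (hmin M).ennreal_ofReal)
      (ae_of_all _ fun ω M N hMN => ENNReal.ofReal_le_ofReal
        (min_le_min_left _ (Nat.cast_le.2 hMN))) (ae_of_all _ fun ω => ?_)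
    refine tendsto_const_nhds.congr' ?_
    filter_upwards [eventually_ge_atTop ⌈g ω⌉₊] with M hM
    rw [min_eq_left ((Nat.le_ceil _).trans (Nat.cast_le.2 hM))]
  rw [tendsto_atTop]
  intro C
  filter_upwards [hlin.eventually (lt_mem_nhds (ENNReal.ofReal_lt_top (r := C)))] with M hM
  have hfin : ∫⁻ ω, ENNReal.ofReal (min (g ω) M) ∂μ ≠ ⊤ :=
    ((lintegral_mono fun ω => ENNReal.ofReal_le_ofReal (min_le_right _ _)).trans_lt
      (by simp [lintegral_const, ENNReal.mul_lt_top])).ne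
  rw [integral_eq_lintegral_of_nonneg_ae (hg0.mono fun ω hω => le_min hω M.cast_nonneg)
    (hmin M).aestronglyMeasurable]
  calc C ≤ (ENNReal.ofReal C).toReal := by rw [ENNReal.toReal_ofReal']; exact le_max_left _ _
    _ ≤ _ := ENNReal.toReal_mono hfin hM.le

lemma ae_tendsto_avg_atTop_of_lintegral_eq_top [IsFiniteMeasure μ] (Y : ℕ → Ω → ℝ)
    (hY0 : ∀ i ω, 0 ≤ Y i ω) (hindep : Pairwise fun i j => Y i ⟂ᵢ[μ] Y j)
    (hident : ∀ i, IdentDistrib (Y i) (Y 0) μ μ)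
    (htop : ∫⁻ ω, ENNReal.ofReal (Y 0 ω) ∂μ = ⊤) :
    ∀ᵐ ω ∂μ, Tendsto (fun n : ℕ => (∑ i ∈ range n, Y i ω) / n) atTop atTop := by
  have htrunc : ∀ M : ℕ, ∀ᵐ ω ∂μ, Tendsto (fun n : ℕ => (∑ i ∈ range n, min (Y i ω) M) / n)
      atTop (𝓝 (∫ ω, min (Y 0 ω) M ∂μ)) := by
    intro M
    have hφ : Measurable fun x : ℝ => min x M := measurable_id.min measurable_const
    refine strong_law_ae_real (fun i ω => min (Y i ω) M) ?_
      (fun i j hij => (hindep hij).comp hφ hφ) (fun i => (hident i).comp hφ)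
    refine Integrable.of_bound
      ((hident 0).aemeasurable_fst.min aemeasurable_const).aestronglyMeasurable M
      (ae_of_all _ fun ω => ?_)
    rw [Real.norm_of_nonneg (le_min (hY0 0 ω) M.cast_nonneg)]
    exact min_le_right _ _
  have hI := tendsto_integral_min_atTop_of_lintegral_eq_top (hident 0).aemeasurable_fst
    (ae_of_all _ (hY0 0)) htop
  filter_upwards [ae_all_iff.2 htrunc] with ω hω
  rw [tendsto_atTop]
  intro C
  obtain ⟨M, hM⟩ := (hI.eventually_gt_atTop C).exists
  filter_upwards [(hω M).eventually_const_lt hM] with n hn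
  exact hn.le.trans (div_le_div_of_nonneg_right
    (sum_le_sum fun i _ => min_le_left _ _) n.cast_nonneg)

lemma tendsto_measure_zero_of_ae_eventually_notMem [IsFiniteMeasure μ] {ι : Type*}
    {L : Filter ι} [L.IsCountablyGenerated] {E : ι → Set Ω} (hE : ∀ i, MeasurableSet (E i))
    (h : ∀ᵐ ω ∂μ, ∀ᶠ i in L, ω ∉ E i) : Tendsto (fun i => μ (E i)) L (𝓝 0) := by
  simpa using tendsto_measure_of_ae_tendsto_indicator_of_isFiniteMeasure L
    MeasurableSet.empty hE (h.mono fun ω hω => hω.mono fun i hi => by simpa using hi)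

end InfiniteMean

/-- The finite-mean infinite-variance case of Theorem 1 of the paper: if
`X₁, X₂, …` are i.i.d. with `E|X₁| < ∞` and `E X₁² = ∞`, then for every fixed
`k > 0` the probability `pₙ = P(|X₁ - x̄ₙ| > k sₙ)` tends to `0`. -/
theorem outlier_prob_tendsto_zero_of_infinite_variance
    {Ω : Type*} [MeasurableSpace Ω] (μ : Measure Ω) [IsProbabilityMeasure μ]
    (X : ℕ → Ω → ℝ) (hmeas : ∀ i, Measurable (X i))
    (hindep : iIndepFun X μ)
    (hident : ∀ i, IdentDistrib (X i) (X 0) μ μ)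
    (hint : Integrable (X 0) μ)
    (hvar : ∫⁻ ω, ENNReal.ofReal ((X 0 ω) ^ 2) ∂μ = ⊤)
    (k : ℝ) (hk : 0 < k) :
    Tendsto (fun n => μ {ω | k * empStd X n ω < |X 0 ω - empMean X n ω|})
      atTop (𝓝 0) := by
  have hpow : Measurable fun x : ℝ => x ^ 2 := measurable_id.pow_const 2
  have hsq := ae_tendsto_avg_atTop_of_lintegral_eq_top (fun i ω => X i ω ^ 2)
    (fun i ω => sq_nonneg _) (fun i j hij => (hindep.indepFun hij).comp hpow hpow)
    (fun i => (hident i).comp hpow) hvar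
  have hmean := strong_law_ae_real X hint (fun i j hij => hindep.indepFun hij) hident
  refine tendsto_measure_zero_of_ae_eventually_notMem (fun n => measurableSet_lt
    (measurable_const.mul (measurable_empStd hmeas n))
    ((hmeas 0).sub (measurable_empMean hmeas n)).abs) ?_
  filter_upwards [hsq, hmean] with ω hωsq hωmean
  have hstd := (tendsto_empStd_atTop X hωmean hωsq).const_mul_atTop hk
  have hdev : Tendsto (fun n => |X 0 ω - empMean X n ω|) atTop (𝓝 |X 0 ω - μ[X 0]|) :=
    (tendsto_const_nhds.sub hωmean).abs
  filter_upwards [hstd.eventually_gt_atTop (|X 0 ω - μ[X 0]| + 1),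
    hdev.eventually_lt_const (lt_add_one _)] with n hstd_n hdev_n
  exact (hdev_n.trans hstd_n).asymm
end

section
/- Let F̄ : ℝ → [0,1] be the tail function of a distribution with exponential tail: F̄(x)·e^{ax} → C as x → ∞ for some constants a > 0 and C > 0. Fix p ∈ (0,1) and σ > 0. Then there exists K > 0 such that for all k > K, (1−p)·F̄(k√(1−p)σ) > F̄(kσ). -/
open Filter Topology Real

/-!
Write `F̄(x) = g(x) e^{-ax}` with `g → C`. With `s = √(1-p) < 1`, multiplying the inequality
by `e^{a s k σ}` turns its left side into `(1-p) g(s k σ) → (1-p) C > 0`, and its right side into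
`g(kσ) e^{-a(1-s)kσ} → 0`.
-/

lemma tendsto_mul_exp_of_lt {f : ℝ → ℝ} {a b C : ℝ} (hba : b < a)
    (hf : Tendsto (fun x => f x * exp (a * x)) atTop (𝓝 C)) :
    Tendsto (fun x => f x * exp (b * x)) atTop (𝓝 0) := by
  have hdecay : Tendsto (fun x => exp ((b - a) * x)) atTop (𝓝 0) :=
    tendsto_exp_atBot.comp (tendsto_id.const_mul_atTop_of_neg (sub_neg.mpr hba))
  simpa [mul_assoc, ← exp_add, ← add_mul] using hf.mul hdecay

lemma eventually_lt_const_mul_apply_mul_of_tendsto_mul_exp {f : ℝ → ℝ} {a C c s : ℝ}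
    (ha : 0 < a) (hC : 0 < C) (hc : 0 < c) (hs0 : 0 < s) (hs1 : s < 1)
    (hf : Tendsto (fun x => f x * exp (a * x)) atTop (𝓝 C)) :
    ∀ᶠ x in atTop, f x < c * f (x * s) := by
  have hscaled : Tendsto (fun x => c * (f (x * s) * exp (a * (x * s)))) atTop (𝓝 (c * C)) :=
    (hf.comp (tendsto_id.atTop_mul_const hs0)).const_mul c
  have hsmall : Tendsto (fun x => f x * exp (a * s * x)) atTop (𝓝 0) :=
    tendsto_mul_exp_of_lt (mul_lt_of_lt_one_right ha hs1) hf
  have hdiff := hscaled.sub hsmall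
  rw [sub_zero] at hdiff
  filter_upwards [hdiff.eventually (eventually_gt_nhds (mul_pos hc hC))] with x hx
  have hexp : 0 < exp (a * (x * s)) := exp_pos _
  have hfactor : 0 < (c * f (x * s) - f x) * exp (a * (x * s)) := by
    rw [show a * s * x = a * (x * s) by ring] at hx
    linarith
  linarith [(mul_pos_iff_of_pos_right hexp).mp hfactor]

theorem put_tail_down_exponential_tail_general
    (Fbar : ℝ → ℝ)
    (a C : ℝ) (ha : 0 < a) (hC : 0 < C)
    (htail : Filter.Tendsto (fun x => Fbar x * Real.exp (a * x)) atTop (𝓝 C))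
    (p : ℝ) (hp0 : 0 < p) (hp1 : p < 1) (σ : ℝ) (hσ : 0 < σ) :
    ∃ K > (0 : ℝ), ∀ k > K,
      (1 - p) * Fbar (k * Real.sqrt (1 - p) * σ) > Fbar (k * σ) := by
  have h1p : 0 < 1 - p := sub_pos.mpr hp1
  have hs0 : 0 < sqrt (1 - p) := sqrt_pos.mpr h1p
  have hs1 : sqrt (1 - p) < 1 := (sqrt_lt' one_pos).mpr (by simpa using hp0)
  have hev : ∀ᶠ k in atTop, 0 < k ∧ Fbar (k * σ) < (1 - p) * Fbar (k * σ * sqrt (1 - p)) :=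
    (eventually_gt_atTop 0).and <| tendsto_id.atTop_mul_const hσ |>.eventually <|
      eventually_lt_const_mul_apply_mul_of_tendsto_mul_exp ha hC h1p hs0 hs1 htail
  obtain ⟨K, hK⟩ := hev.exists_forall_of_atTop
  refine ⟨K, (hK K le_rfl).1, fun k hk => ?_⟩
  rw [mul_right_comm]
  exact (hK k hk.le).2

/-- Exponential-tail case of "put tail down": if the tail function `F̄` of a distribution
satisfies `F̄(x)·e^{ax} → C` as `x → ∞` with `a, C > 0`, then for every `p ∈ (0,1)` and
`σ > 0` the inequality `(1-p)·F̄(k√(1-p)σ) > F̄(kσ)` holds for all sufficiently large `k`. -/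
theorem put_tail_down_exponential_tail
    (F : ℝ → ℝ) (Fbar : ℝ → ℝ) (hFbar : ∀ x, Fbar x = 1 - F x)
    (hcdf : Monotone F) (hrange : ∀ x, Fbar x ∈ Set.Icc (0 : ℝ) 1)
    (a C : ℝ) (ha : 0 < a) (hC : 0 < C)
    (htail : Filter.Tendsto (fun x => Fbar x * Real.exp (a * x)) atTop (𝓝 C))
    (p : ℝ) (hp0 : 0 < p) (hp1 : p < 1) (σ : ℝ) (hσ : 0 < σ) :
    ∃ K > (0 : ℝ), ∀ k > K,
      (1 - p) * Fbar (k * Real.sqrt (1 - p) * σ) > Fbar (k * σ) :=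
  put_tail_down_exponential_tail_general Fbar a C ha hC htail p hp0 hp1 σ hσ
end

section
/- Let F̄ : ℝ → [0,1] be the tail function of a distribution with power tail: F̄(x)·x^α → C as x → ∞ for some constants α > 2 and C > 0. Fix p ∈ (0,1) and σ > 0. Then there exists K > 0 such that for all k > K, (1−p)·F̄(k√(1−p)σ) > F̄(kσ). -/
open MeasureTheory ProbabilityTheory Filter Topology

/-! If `F̄(x) ~ C x^{-α}`, then `(1-p) F̄(√(1-p) x) / F̄(x) → (1-p)^{1-α/2}`, which exceeds `1`
exactly when `α > 2`. -/

theorem tendsto_comp_const_mul_mul_rpow {f : ℝ → ℝ} {α C c : ℝ}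
    (hf : Tendsto (fun x => f x * x ^ α) atTop (𝓝 C)) (hc : 0 < c) :
    Tendsto (fun x => f (c * x) * x ^ α) atTop (𝓝 (C * c ^ (-α))) := by
  have hscaled : Tendsto (fun x => f (c * x) * (c * x) ^ α) atTop (𝓝 C) :=
    hf.comp (tendsto_id.const_mul_atTop hc)
  refine (hscaled.mul_const _).congr' ?_
  filter_upwards [eventually_gt_atTop 0] with x hx
  rw [Real.mul_rpow hc.le hx.le, Real.rpow_neg hc.le]
  field_simp

theorem eventually_lt_mul_comp_const_mul {f : ℝ → ℝ} {α C c r : ℝ}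
    (hf : Tendsto (fun x => f x * x ^ α) atTop (𝓝 C)) (hC : 0 < C) (hc : 0 < c)
    (hr : 1 < r * c ^ (-α)) :
    ∀ᶠ x in atTop, f x < r * f (c * x) := by
  have hlim : Tendsto (fun x => r * f (c * x) * x ^ α) atTop (𝓝 (r * (C * c ^ (-α)))) := by
    simpa only [mul_assoc] using (tendsto_comp_const_mul_mul_rpow hf hc).const_mul r
  have hC_lt : C < r * (C * c ^ (-α)) := by nlinarith
  filter_upwards [hf.eventually_lt hlim hC_lt, eventually_gt_atTop 0] with x hlt hx
  exact lt_of_mul_lt_mul_right hlt (Real.rpow_nonneg hx.le α)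

theorem one_lt_mul_sqrt_rpow_neg {q α : ℝ} (hq0 : 0 < q) (hq1 : q < 1) (hα : 2 < α) :
    1 < q * Real.sqrt q ^ (-α) := by
  have hpow : q * Real.sqrt q ^ (-α) = q ^ (1 - α / 2) := by
    rw [Real.sqrt_eq_rpow, ← Real.rpow_mul hq0.le, sub_eq_add_neg, Real.rpow_add hq0,
      Real.rpow_one]
    ring_nf
  rw [hpow, Real.one_lt_rpow_iff_of_pos hq0]
  exact Or.inr ⟨hq1, by linarith⟩

theorem put_tail_down_power_tail_general
    (Fbar : ℝ → ℝ)
    (α C : ℝ) (hα : 2 < α) (hC : 0 < C)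
    (htail : Filter.Tendsto (fun x => Fbar x * x ^ α) atTop (𝓝 C))
    (p : ℝ) (hp0 : 0 < p) (hp1 : p < 1) (σ : ℝ) (hσ : 0 < σ) :
    ∃ K > (0 : ℝ), ∀ k > K,
      (1 - p) * Fbar (k * Real.sqrt (1 - p) * σ) > Fbar (k * σ) := by
  have hfactor : 1 < (1 - p) * Real.sqrt (1 - p) ^ (-α) :=
    one_lt_mul_sqrt_rpow_neg (by linarith) (by linarith) hα
  have hx : ∀ᶠ x in atTop, Fbar x < (1 - p) * Fbar (Real.sqrt (1 - p) * x) :=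
    eventually_lt_mul_comp_const_mul htail hC (Real.sqrt_pos.mpr (by linarith)) hfactor
  have hk : ∀ᶠ k in atTop, Fbar (k * σ) < (1 - p) * Fbar (Real.sqrt (1 - p) * (k * σ)) :=
    (tendsto_id.atTop_mul_const hσ).eventually hx
  obtain ⟨K, hK0, hK⟩ := (atTop_basis_Ioi' (0 : ℝ)).eventually_iff.mp hk
  refine ⟨K, hK0, fun k hkK => ?_⟩
  rw [show k * Real.sqrt (1 - p) * σ = Real.sqrt (1 - p) * (k * σ) by ring]
  exact hK hkK

/-- Power-tail case of "put tail down": if the tail function `F̄` of a distribution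
satisfies `F̄(x)·x^α → C` as `x → ∞` with `α > 2`, `C > 0`, then for every `p ∈ (0,1)` and
`σ > 0` the inequality `(1-p)·F̄(k√(1-p)σ) > F̄(kσ)` holds for all sufficiently large `k`. -/
theorem put_tail_down_power_tail
    (F : ℝ → ℝ) (Fbar : ℝ → ℝ) (hFbar : ∀ x, Fbar x = 1 - F x)
    (hcdf : Monotone F) (hrange : ∀ x, Fbar x ∈ Set.Icc (0 : ℝ) 1)
    (α C : ℝ) (hα : 2 < α) (hC : 0 < C)
    (htail : Filter.Tendsto (fun x => Fbar x * x ^ α) atTop (𝓝 C))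
    (p : ℝ) (hp0 : 0 < p) (hp1 : p < 1) (σ : ℝ) (hσ : 0 < σ) :
    ∃ K > (0 : ℝ), ∀ k > K,
      (1 - p) * Fbar (k * Real.sqrt (1 - p) * σ) > Fbar (k * σ) :=
  put_tail_down_power_tail_general Fbar α C hα hC htail p hp0 hp1 σ hσ
end
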